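/- Let E be an economy and λ a positive simple function on T. Then an allocation x is a competitive allocation of E (i.e., x ∈ W(E)) if and only if λx (t ↦ λ(t)x(t)) is a competitive allocation of the rescaled economy Ξ(E, λ). Moreover, if (p, x) is a competitive equilibrium for E then (p, λx) is a competitive equilibrium for Ξ(E, λ), and conversely. -/

import Mathlib

open MeasureTheory
open scoped Classical

noncomputable section

/-- Dot product of two vectors in `ℝ^l`. -/
def dotp {l : ℕ} (a x : Fin l → ℝ) : ℝ := ∑ i, a i * x i

/-- Strict preference associated with a weak preference relation. -/
def StrictPref {T : Type*} {l : ℕ} (pref : T → (Fin l → ℝ) → (Fin l → ℝ) → Prop)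
    (t : T) (x y : Fin l → ℝ) : Prop :=
  pref t x y ∧ ¬ pref t y x

/-- An allocation: an integrable function into the nonnegative orthant. -/
def IsAllocation {T : Type*} [MeasurableSpace T] {l : ℕ} (μ : Measure T)
    (x : T → Fin l → ℝ) : Prop :=
  Integrable x μ ∧ ∀ t, 0 ≤ x t

/-- A feasible allocation. -/
def Feasible {T : Type*} [MeasurableSpace T] {l : ℕ} (μ : Measure T)
    (ω : T → Fin l → ℝ) (x : T → Fin l → ℝ) : Prop :=
  (∫ t, x t ∂μ) = ∫ t, ω t ∂μ

/-- Coalition `S` blocks the allocation `x`. -/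
def Blocks {T : Type*} [MeasurableSpace T] {l : ℕ} (μ : Measure T)
    (ω : T → Fin l → ℝ) (pref : T → (Fin l → ℝ) → (Fin l → ℝ) → Prop)
    (S : Set T) (x : T → Fin l → ℝ) : Prop :=
  MeasurableSet S ∧ 0 < μ S ∧ ∃ y : T → Fin l → ℝ, IsAllocation μ y ∧
    (∫ t in S, y t ∂μ) = (∫ t in S, ω t ∂μ) ∧
    ∀ t ∈ S, StrictPref pref t (y t) (x t)

/-- Membership in the core `C(E)`. -/
def InCore {T : Type*} [MeasurableSpace T] {l : ℕ} (μ : Measure T)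
    (ω : T → Fin l → ℝ) (pref : T → (Fin l → ℝ) → (Fin l → ℝ) → Prop)
    (x : T → Fin l → ℝ) : Prop :=
  IsAllocation μ x ∧ Feasible μ ω x ∧ ∀ S : Set T, ¬ Blocks μ ω pref S x

/-- `(p, x)` is a competitive equilibrium (with `p ≥ 0`). -/
def IsCompEquil {T : Type*} [MeasurableSpace T] {l : ℕ} (μ : Measure T)
    (ω : T → Fin l → ℝ) (pref : T → (Fin l → ℝ) → (Fin l → ℝ) → Prop)
    (p : Fin l → ℝ) (x : T → Fin l → ℝ) : Prop :=
  0 ≤ p ∧ IsAllocation μ x ∧ Feasible μ ω x ∧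
    ∀ᵐ t ∂μ, dotp p (x t) ≤ dotp p (ω t) ∧
      ∀ y : Fin l → ℝ, 0 ≤ y → StrictPref pref t y (x t) → dotp p (ω t) < dotp p y

/-- `x` is a competitive allocation, i.e. belongs to `W(E)`. -/
def InW {T : Type*} [MeasurableSpace T] {l : ℕ} (μ : Measure T)
    (ω : T → Fin l → ℝ) (pref : T → (Fin l → ℝ) → (Fin l → ℝ) → Prop)
    (x : T → Fin l → ℝ) : Prop :=
  ∃ p : Fin l → ℝ, IsCompEquil μ ω pref p x

/-- The rescaled measure `μ̂(S) = ∑ i, μ(S ∩ G i) / c i`. -/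
def muHat {T : Type*} [MeasurableSpace T] (μ : Measure T) {n : ℕ}
    (G : Fin n → Set T) (c : Fin n → ℝ) : Measure T :=
  ∑ i, (ENNReal.ofReal (c i))⁻¹ • μ.restrict (G i)

/-- The rescaled preferences `≽̂`, defined by `λ(t) • x ≽̂ₜ λ(t) • y ↔ x ≽ₜ y`. -/
def prefHat {T : Type*} {l : ℕ} (lam : T → ℝ)
    (pref : T → (Fin l → ℝ) → (Fin l → ℝ) → Prop) (t : T) (u v : Fin l → ℝ) : Prop :=
  pref t ((lam t)⁻¹ • u) ((lam t)⁻¹ • v)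


section RescaleHelpers
variable {T : Type*} [MeasurableSpace T] {μ : MeasureTheory.Measure T} {l : ℕ} {n : ℕ}
  {G : Fin n → Set T} {c : Fin n → ℝ} {lam : T → ℝ}

lemma dotp_smul (p : Fin l → ℝ) (a : ℝ) (v : Fin l → ℝ) :
    dotp p (a • v) = a * dotp p v := by
  simp only [dotp, Pi.smul_apply, smul_eq_mul, Finset.mul_sum]
  exact Finset.sum_congr rfl fun i _ => by ring

lemma coef_ne_zero (i : Fin n) : (ENNReal.ofReal (c i))⁻¹ ≠ 0 :=
  ENNReal.inv_ne_zero.2 ENNReal.ofReal_ne_top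

lemma coef_ne_top (hc : ∀ i, 0 < c i) (i : Fin n) :
    (ENNReal.ofReal (c i))⁻¹ ≠ ⊤ :=
  ENNReal.inv_ne_top.2 (ENNReal.ofReal_pos.2 (hc i)).ne'

lemma muHat_null_iff (hGmeas : ∀ i, MeasurableSet (G i))
    (hGcover : (⋃ i, G i) = Set.univ) (hc : ∀ i, 0 < c i) (s : Set T) :
    muHat μ G c s = 0 ↔ μ s = 0 := by
  have happ : muHat μ G c s = ∑ i, (ENNReal.ofReal (c i))⁻¹ * μ (s ∩ G i) := by
    simp only [muHat, Measure.coe_finset_sum, Finset.sum_apply, Measure.smul_apply,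
      smul_eq_mul]
    exact Finset.sum_congr rfl fun i _ => by rw [Measure.restrict_apply' (hGmeas i)]
  rw [happ]
  constructor
  · intro h
    have h0 : ∀ i, μ (s ∩ G i) = 0 := by
      intro i
      have := (Finset.sum_eq_zero_iff.1 h) i (Finset.mem_univ i)
      rcases mul_eq_zero.1 this with h' | h'
      · exact absurd h' (coef_ne_zero i)
      · exact h'
    have hs : s = ⋃ i, s ∩ G i := by
      rw [← Set.inter_iUnion, hGcover, Set.inter_univ]
    refine le_antisymm ?_ zero_le
    calc μ s = μ (⋃ i, s ∩ G i) := by rw [← hs]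
      _ ≤ ∑' i, μ (s ∩ G i) := measure_iUnion_le _
      _ = 0 := by simp [h0]
  · intro h
    refine Finset.sum_eq_zero fun i _ => ?_
    have : μ (s ∩ G i) = 0 := measure_mono_null Set.inter_subset_left h
    rw [this, mul_zero]

lemma ae_muHat_iff (hGmeas : ∀ i, MeasurableSet (G i))
    (hGcover : (⋃ i, G i) = Set.univ) (hc : ∀ i, 0 < c i) {P : T → Prop} :
    (∀ᵐ t ∂ muHat μ G c, P t) ↔ ∀ᵐ t ∂μ, P t := by
  rw [ae_iff, ae_iff, muHat_null_iff hGmeas hGcover hc]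

lemma integrable_piece (hGmeas : ∀ i, MeasurableSet (G i)) (hc : ∀ i, 0 < c i)
    (hlam : ∀ i, ∀ t ∈ G i, lam t = c i) {g : T → Fin l → ℝ} (hg : Integrable g μ)
    (i : Fin n) :
    Integrable (fun t => lam t • g t) ((ENNReal.ofReal (c i))⁻¹ • μ.restrict (G i)) := by
  rw [integrable_smul_measure (coef_ne_zero i) (coef_ne_top hc i)]
  have heq : (fun t => lam t • g t) =ᵐ[μ.restrict (G i)] fun t => c i • g t :=
    ae_restrict_of_forall_mem (hGmeas i) (fun t ht => by dsimp only; rw [hlam i t ht])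
  exact ((hg.restrict (s := G i)).smul (c i)).congr heq.symm

lemma integral_hat (hGmeas : ∀ i, MeasurableSet (G i))
    (hGdisj : Pairwise (Function.onFun Disjoint G)) (hGcover : (⋃ i, G i) = Set.univ)
    (hc : ∀ i, 0 < c i) (hlam : ∀ i, ∀ t ∈ G i, lam t = c i)
    {g : T → Fin l → ℝ} (hg : Integrable g μ) :
    (∫ t, lam t • g t ∂ muHat μ G c) = ∫ t, g t ∂μ := by
  rw [muHat, integral_finset_sum_measure (fun i _ => integrable_piece hGmeas hc hlam hg i)]
  have hpiece : ∀ i, (∫ t, lam t • g t ∂((ENNReal.ofReal (c i))⁻¹ • μ.restrict (G i)))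
      = ∫ t in G i, g t ∂μ := by
    intro i
    rw [integral_smul_measure]
    have heq : (fun t => lam t • g t) =ᵐ[μ.restrict (G i)] fun t => c i • g t :=
      ae_restrict_of_forall_mem (hGmeas i) (fun t ht => by dsimp only; rw [hlam i t ht])
    rw [integral_congr_ae heq, integral_smul, ENNReal.toReal_inv,
      ENNReal.toReal_ofReal (hc i).le, smul_smul, inv_mul_cancel₀ (hc i).ne', one_smul]
  rw [Finset.sum_congr rfl fun i _ => hpiece i]
  rw [← integral_iUnion_fintype hGmeas hGdisj (fun i => hg.integrableOn), hGcover,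
    Measure.restrict_univ]

lemma integrable_hat (hGmeas : ∀ i, MeasurableSet (G i)) (hc : ∀ i, 0 < c i)
    (hlam : ∀ i, ∀ t ∈ G i, lam t = c i) {g : T → Fin l → ℝ} (hg : Integrable g μ) :
    Integrable (fun t => lam t • g t) (muHat μ G c) := by
  rw [muHat, integrable_finset_sum_measure]
  exact fun i _ => integrable_piece hGmeas hc hlam hg i

end RescaleHelpers

/-- An allocation `x` is competitive for `E` iff `λx` is competitive
for the rescaled economy `Ξ(E, λ)`; moreover `(p, x)` is a competitive equilibrium for
`E` iff `(p, λx)` is one for `Ξ(E, λ)`. -/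
theorem competitive_rescaling
    {T : Type*} [MeasurableSpace T] (μ : Measure T) [IsFiniteMeasure μ]
    {l : ℕ} (hl : 1 ≤ l)
    (ω : T → Fin l → ℝ) (hωint : Integrable ω μ) (hωnn : ∀ t, 0 ≤ ω t)
    (pref : T → (Fin l → ℝ) → (Fin l → ℝ) → Prop)
    (hcomplete : ∀ t (x y : Fin l → ℝ), 0 ≤ x → 0 ≤ y → pref t x y ∨ pref t y x)
    (htrans : ∀ t (x y z : Fin l → ℝ), 0 ≤ x → 0 ≤ y → 0 ≤ z →
      pref t x y → pref t y z → pref t x z)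
    (hmeas : ∀ x y : T → Fin l → ℝ, Integrable x μ → Integrable y μ →
      (∀ t, 0 ≤ x t) → (∀ t, 0 ≤ y t) →
      MeasurableSet {t | StrictPref pref t (x t) (y t)})
    (n : ℕ) (G : Fin n → Set T) (hGmeas : ∀ i, MeasurableSet (G i))
    (hGdisj : Pairwise (Function.onFun Disjoint G)) (hGcover : (⋃ i, G i) = Set.univ)
    (c : Fin n → ℝ) (hc : ∀ i, 0 < c i)
    (lam : T → ℝ) (hlam : ∀ i, ∀ t ∈ G i, lam t = c i)
    (x : T → Fin l → ℝ) (hx : IsAllocation μ x)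
    :
    (InW μ ω pref x ↔
      InW (muHat μ G c) (fun t => lam t • ω t) (prefHat lam pref)
        (fun t => lam t • x t)) ∧
    (∀ p : Fin l → ℝ,
      IsCompEquil μ ω pref p x ↔
        IsCompEquil (muHat μ G c) (fun t => lam t • ω t) (prefHat lam pref) p
          (fun t => lam t • x t)) := by
  have lam_pos : ∀ t, 0 < lam t := by
    intro t
    have ht : t ∈ ⋃ i, G i := hGcover ▸ Set.mem_univ t
    obtain ⟨i, hi⟩ := Set.mem_iUnion.1 ht
    rw [hlam i t hi]; exact hc i
  have key : ∀ p : Fin l → ℝ,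
      IsCompEquil μ ω pref p x ↔
        IsCompEquil (muHat μ G c) (fun t => lam t • ω t) (prefHat lam pref) p
          (fun t => lam t • x t) := by
    intro p
    have hptwise : ∀ t,
        (dotp p (x t) ≤ dotp p (ω t) ∧ ∀ y, 0 ≤ y → StrictPref pref t y (x t) →
            dotp p (ω t) < dotp p y)
        ↔ (dotp p (lam t • x t) ≤ dotp p (lam t • ω t) ∧
           ∀ y, 0 ≤ y → StrictPref (prefHat lam pref) t y (lam t • x t) →
            dotp p (lam t • ω t) < dotp p y) := by
      intro t
      have hpos := lam_pos t
      have hne : lam t ≠ 0 := hpos.ne'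
      have hsx : (lam t)⁻¹ • (lam t • x t) = x t := by
        rw [smul_smul, inv_mul_cancel₀ hne, one_smul]
      constructor
      · rintro ⟨h1, h2⟩
        refine ⟨?_, ?_⟩
        · rw [dotp_smul, dotp_smul]
          exact mul_le_mul_of_nonneg_left h1 hpos.le
        · intro y hy hsp
          have hsp0 : StrictPref pref t ((lam t)⁻¹ • y) ((lam t)⁻¹ • (lam t • x t)) := hsp
          rw [hsx] at hsp0
          have hlt := h2 _ (smul_nonneg (inv_nonneg.2 hpos.le) hy) hsp0
          rw [dotp_smul] at hlt
          rw [dotp_smul]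
          calc lam t * dotp p (ω t) < lam t * ((lam t)⁻¹ * dotp p y) :=
                mul_lt_mul_of_pos_left hlt hpos
            _ = dotp p y := mul_inv_cancel_left₀ hne _
      · rintro ⟨h1, h2⟩
        rw [dotp_smul, dotp_smul] at h1
        refine ⟨le_of_mul_le_mul_left h1 hpos, ?_⟩
        intro y hy hsp
        have hsp2 : StrictPref (prefHat lam pref) t (lam t • y) (lam t • x t) := by
          show StrictPref pref t ((lam t)⁻¹ • (lam t • y)) ((lam t)⁻¹ • (lam t • x t))
          rwa [hsx, smul_smul, inv_mul_cancel₀ hne, one_smul]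
        have hlt := h2 _ (smul_nonneg hpos.le hy) hsp2
        rw [dotp_smul, dotp_smul] at hlt
        exact (mul_lt_mul_iff_right₀ hpos).1 hlt
    constructor
    · rintro ⟨hp, _, hfeas, hae⟩
      refine ⟨hp, ⟨integrable_hat hGmeas hc hlam hx.1,
          fun t => smul_nonneg (lam_pos t).le (hx.2 t)⟩, ?_, ?_⟩
      · show (∫ t, lam t • x t ∂ muHat μ G c) = ∫ t, lam t • ω t ∂ muHat μ G c
        rw [integral_hat hGmeas hGdisj hGcover hc hlam hx.1,
          integral_hat hGmeas hGdisj hGcover hc hlam hωint]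
        exact hfeas
      · exact (ae_muHat_iff hGmeas hGcover hc).2 (hae.mono fun t ht => (hptwise t).1 ht)
    · rintro ⟨hp, _, hfeas, hae⟩
      refine ⟨hp, hx, ?_, ?_⟩
      · have hfeas' : (∫ t, lam t • x t ∂ muHat μ G c) = ∫ t, lam t • ω t ∂ muHat μ G c :=
          hfeas
        rw [integral_hat hGmeas hGdisj hGcover hc hlam hx.1,
          integral_hat hGmeas hGdisj hGcover hc hlam hωint] at hfeas'
        exact hfeas'
      · exact ((ae_muHat_iff hGmeas hGcover hc).1 hae).mono fun t ht => (hptwise t).2 ht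
  refine ⟨⟨fun ⟨p, h⟩ => ⟨p, (key p).1 h⟩, fun ⟨p, h⟩ => ⟨p, (key p).2 h⟩⟩, key⟩
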